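/- arXiv:1301.2967 — 9 statements merged into one kernel-verified Lean document; each statement's English description precedes it below -/
import Mathlib

section
/- Let k ≥ 2 and let a_1,…,a_k be integers, and set s_j = a_1 + a_2 + … + a_j for 1 ≤ j ≤ k. Define sequences A_1,…,A_k : ℕ → ℤ (the numbers of nodes carrying each of the k labels (s_1),(s_2),…,(s_k) at each level of the generating tree of the succession rule (a_1); (s_j) ⇝ (s_{j+1})(s_1)^{s_j−1} for 1 ≤ j ≤ k−1; (s_k) ⇝ (s_k)(s_1)^{s_k−1}) by: A_1(0)=1, A_j(0)=0 for 2 ≤ j ≤ k, and for all n ≥ 0: A_1(n+1) = Σ_{j=1}^{k} (s_j − 1)·A_j(n); A_{j+1}(n+1) = A_j(n) for 1 ≤ j ≤ k−2; A_k(n+1) = A_{k−1}(n) + A_k(n). Then for every n ≥ 0, Σ_{j=1}^{k} A_j(n) = f_n, where f is the C-finite sequence with coefficients a_1,…,a_k and default initial conditions. -/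
/-!
Let `T j n = ∑_{i=j}^{k} A i n` be the tail sums of the label counts. The productions
`(s_j) ⇝ (s_{j+1})…` and `(s_k) ⇝ (s_k)…` give `T (j+1) (n+1) = T j n`, so
`T 1 (n+1) = A 1 (n+1) + T 1 n`; and summation by parts turns `∑_j s_j A j n` into
`∑_l a_l T l n`, so `A 1 (n+1) = ∑_l a_l T l n - T 1 n`. By induction on `n`,
`T j n = f (n+1-j)` (zero when `j > n+1`), which is the C-finite recurrence for `T 1 (n+1)`.
In particular `∑_j A j n = T 1 n = f n`.
-/

open Finset

lemma sum_Icc_eq_add_sum_Icc_succ {M : Type*} [AddCommMonoid M] (g : ℕ → M) {j k : ℕ}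
    (hjk : j ≤ k) : ∑ i ∈ Icc j k, g i = g j + ∑ i ∈ Icc (j + 1) k, g i := by
  rw [Icc_add_one_left_eq_Ioc, add_sum_Ioc_eq_sum_Icc hjk]

lemma sum_Icc_partialSum_mul {R : Type*} [NonUnitalNonAssocSemiring R] (a b : ℕ → R) (k : ℕ) :
    ∑ j ∈ Icc 1 k, (∑ l ∈ Icc 1 j, a l) * b j = ∑ l ∈ Icc 1 k, a l * ∑ j ∈ Icc l k, b j := by
  simp_rw [sum_mul, mul_sum]
  exact sum_comm' fun j l => by simp only [mem_Icc]; omega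

lemma sum_Icc_succ_eq_of_shift {M : Type*} [AddCommMonoid M] {B C : ℕ → M} {k : ℕ}
    (hmid : ∀ j, 1 ≤ j → j ≤ k - 2 → B (j + 1) = C j) (hlast : B k = C (k - 1) + C k)
    {j : ℕ} (hj : 1 ≤ j) (hjk : j < k) :
    ∑ i ∈ Icc (j + 1) k, B i = ∑ i ∈ Icc j k, C i := by
  induction hd : k - 1 - j generalizing j with
  | zero =>
    obtain rfl : j = k - 1 := by omega
    rw [Nat.sub_add_cancel (by omega), Icc_self, sum_singleton, hlast,
      sum_Icc_eq_add_sum_Icc_succ C (by omega), Nat.sub_add_cancel (by omega), Icc_self,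
      sum_singleton]
  | succ d ih =>
    rw [sum_Icc_eq_add_sum_Icc_succ B (by omega), ih (by omega) (by omega) (by omega),
      hmid j hj (by omega), ← sum_Icc_eq_add_sum_Icc_succ C (by omega)]

lemma sum_Icc_labelCounts_eq {k : ℕ} (hk : 2 ≤ k) {a f s : ℕ → ℤ} (hf0 : f 0 = 1)
    (hf : ∀ n : ℕ, 1 ≤ n → f n = ∑ i ∈ Icc 1 k, a i * (if i ≤ n then f (n - i) else 0))
    (hs : ∀ j, s j = ∑ l ∈ Icc 1 j, a l) {A : ℕ → ℕ → ℤ} (hA10 : A 1 0 = 1)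
    (hAj0 : ∀ j, 2 ≤ j → j ≤ k → A j 0 = 0)
    (hA1 : ∀ n : ℕ, A 1 (n + 1) = ∑ j ∈ Icc 1 k, (s j - 1) * A j n)
    (hAmid : ∀ n : ℕ, ∀ j, 1 ≤ j → j ≤ k - 2 → A (j + 1) (n + 1) = A j n)
    (hAk : ∀ n : ℕ, A k (n + 1) = A (k - 1) n + A k n) (n : ℕ) :
    ∀ j ∈ Icc 1 k, ∑ i ∈ Icc j k, A i n = if j ≤ n + 1 then f (n + 1 - j) else 0 := by
  have hshift (n j : ℕ) (hj : 1 ≤ j) (hjk : j < k) :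
      ∑ i ∈ Icc (j + 1) k, A i (n + 1) = ∑ i ∈ Icc j k, A i n :=
    sum_Icc_succ_eq_of_shift (hAmid n) (hAk n) hj hjk
  induction n with
  | zero =>
    intro j hj
    rw [mem_Icc] at hj
    rw [sum_Icc_eq_add_sum_Icc_succ _ hj.2,
      sum_eq_zero fun i hi => hAj0 i (by rw [mem_Icc] at hi; omega) (mem_Icc.mp hi).2]
    rcases hj.1.eq_or_lt with rfl | hj1
    · simp [hA10, hf0]
    · simp [hAj0 j hj1 hj.2, show ¬ j ≤ 1 by omega]
  | succ n ih =>
    intro j hj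
    rw [mem_Icc] at hj
    rcases hj.1.eq_or_lt with rfl | hj1
    · have hweighted : ∑ j ∈ Icc 1 k, s j * A j n = f (n + 1) := by
        simp_rw [hs, sum_Icc_partialSum_mul]
        rw [hf (n + 1) (by omega)]
        exact sum_congr rfl fun l hl => by rw [ih l hl]
      rw [sum_Icc_eq_add_sum_Icc_succ _ (by omega), hshift n 1 le_rfl (by omega), hA1]
      simp_rw [sub_mul, one_mul, sum_sub_distrib, hweighted]
      simp
    · obtain ⟨j, rfl⟩ : ∃ j', j = j' + 1 := ⟨j - 1, by omega⟩
      rw [hshift n j (by omega) (by omega), ih j (by simp; omega)]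
      simp only [add_le_add_iff_right, Nat.add_sub_add_right]

/-- The total number of nodes per level in the generating tree of the succession rule
`(a₁); (s_j) ⇝ (s_{j+1})(s_1)^{s_j−1}, (s_k) ⇝ (s_k)(s_1)^{s_k−1}` equals the C-finite
sequence with coefficients `a₁, …, a_k` and default initial conditions. -/
theorem stmt_0 (k : ℕ) (hk : 2 ≤ k) (a : ℕ → ℤ)
    (f : ℕ → ℤ) (hf0 : f 0 = 1)
    (hf : ∀ n : ℕ, 1 ≤ n →
      f n = ∑ i ∈ Finset.Icc 1 k, a i * (if i ≤ n then f (n - i) else 0))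
    (s : ℕ → ℤ) (hs : ∀ j, s j = ∑ l ∈ Finset.Icc 1 j, a l)
    (A : ℕ → ℕ → ℤ)
    (hA10 : A 1 0 = 1)
    (hAj0 : ∀ j, 2 ≤ j → j ≤ k → A j 0 = 0)
    (hA1 : ∀ n : ℕ, A 1 (n + 1) = ∑ j ∈ Finset.Icc 1 k, (s j - 1) * A j n)
    (hAmid : ∀ n : ℕ, ∀ j, 1 ≤ j → j ≤ k - 2 → A (j + 1) (n + 1) = A j n)
    (hAk : ∀ n : ℕ, A k (n + 1) = A (k - 1) n + A k n) :
    ∀ n : ℕ, ∑ j ∈ Finset.Icc 1 k, A j n = f n := by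
  intro n
  rw [sum_Icc_labelCounts_eq hk hf0 hf hs hA10 hAj0 hA1 hAmid hAk n 1 (by simp; omega)]
  simp
end

section
/- Let a_1 > 0 and a_2 be integers, and let q_2, r_2 be integers such that: if a_1 + a_2 ≤ 0 then q_2 > 0, r_2 > 0 and −(a_1 + a_2) = q_2·a_1 − r_2; otherwise q_2 = 0 and r_2 = a_1 + a_2. Define sequences A, R, Z : ℕ → ℤ (the numbers of nodes labelled (a_1), (r_2), (0) at each level of the generating tree of the succession rule (a_1); (a_1) ⇝ (0)^{q_2}(r_2)(a_1)^{a_1−(q_2+1)}; (r_2) ⇝ ((0)^{q_2}(r_2))^{q_2}(0)^{q_2}(r_2)(a_1)^{r_2−(q_2+1)^2}, where (0) produces no sons) by: A(0)=1, R(0)=Z(0)=0, and for n ≥ 0: A(n+1) = (a_1−q_2−1)·A(n) + (r_2−(q_2+1)^2)·R(n); R(n+1) = A(n) + (q_2+1)·R(n); Z(n+1) = q_2·A(n) + q_2(q_2+1)·R(n). Then for every n ≥ 0, A(n) + R(n) + Z(n) = f_n, where f is the C-finite sequence with coefficients a_1, a_2 and default initial conditions. -/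
/-!
Every `(0)`-node is born next to an `(r₂)`-node in the ratio `q₂ : 1`, so `Z = q₂ R` level by
level. In both cases of the hypotheses `r₂ = (q₂ + 1) a₁ + a₂`, and with this value the level
totals `A + (q₂ + 1) R` satisfy `f (n + 2) = a₁ f (n + 1) + a₂ f n`; they start like `f`.
-/

section TwoStepRecurrence

variable {α : Type*} [CommRing α]

theorem eq_of_two_step_recurrence {c d : α} {u v : ℕ → α}
    (hu : ∀ n, u (n + 2) = c * u (n + 1) + d * u n)
    (hv : ∀ n, v (n + 2) = c * v (n + 1) + d * v n)
    (h0 : u 0 = v 0) (h1 : u 1 = v 1) : ∀ n, u n = v n := by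
  intro n
  induction n using Nat.twoStepInduction with
  | zero => exact h0
  | one => exact h1
  | more m ih0 ih1 => rw [hu, hv, ih0, ih1]

end TwoStepRecurrence

section GeneratingTree

variable {α : Type*} [CommRing α] {a1 a2 q r : α} {A R Z : ℕ → α}

theorem tree_zero_count_eq_mul (hZ0 : Z 0 = 0) (hR0 : R 0 = 0)
    (hR : ∀ n, R (n + 1) = A n + (q + 1) * R n)
    (hZ : ∀ n, Z (n + 1) = q * A n + q * (q + 1) * R n) :
    ∀ n, Z n = q * R n
  | 0 => by rw [hZ0, hR0, mul_zero]
  | n + 1 => by rw [hZ, hR]; ring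

theorem tree_level_total_recurrence (hr : r = (q + 1) * a1 + a2) (hZR : ∀ n, Z n = q * R n)
    (hA : ∀ n, A (n + 1) = (a1 - q - 1) * A n + (r - (q + 1) ^ 2) * R n)
    (hR : ∀ n, R (n + 1) = A n + (q + 1) * R n) (n : ℕ) :
    A (n + 2) + R (n + 2) + Z (n + 2) =
      a1 * (A (n + 1) + R (n + 1) + Z (n + 1)) + a2 * (A n + R n + Z n) := by
  simp only [hZR, hA, hR, hr]
  ring

end GeneratingTree

theorem succession_rule_r2_eq {a1 a2 q2 r2 : ℤ}
    (hneg : a1 + a2 ≤ 0 → 0 < q2 ∧ 0 < r2 ∧ -(a1 + a2) = q2 * a1 - r2)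
    (hpos : 0 < a1 + a2 → q2 = 0 ∧ r2 = a1 + a2) :
    r2 = (q2 + 1) * a1 + a2 := by
  rcases le_or_gt (a1 + a2) 0 with h | h
  · obtain ⟨-, -, hdiv⟩ := hneg h
    linarith
  · obtain ⟨rfl, rfl⟩ := hpos h
    ring

theorem stmt_1_general (a1 a2 : ℤ)
    (q2 r2 : ℤ)
    (hneg : a1 + a2 ≤ 0 → 0 < q2 ∧ 0 < r2 ∧ -(a1 + a2) = q2 * a1 - r2)
    (hpos : 0 < a1 + a2 → q2 = 0 ∧ r2 = a1 + a2)
    (A R Z : ℕ → ℤ)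
    (hA0 : A 0 = 1) (hR0 : R 0 = 0) (hZ0 : Z 0 = 0)
    (hA : ∀ n : ℕ, A (n + 1) = (a1 - q2 - 1) * A n + (r2 - (q2 + 1) ^ 2) * R n)
    (hR : ∀ n : ℕ, R (n + 1) = A n + (q2 + 1) * R n)
    (hZ : ∀ n : ℕ, Z (n + 1) = q2 * A n + q2 * (q2 + 1) * R n)
    (f : ℕ → ℤ) (hf0 : f 0 = 1) (hf1 : f 1 = a1)
    (hf : ∀ n : ℕ, f (n + 2) = a1 * f (n + 1) + a2 * f n) :
    ∀ n : ℕ, A n + R n + Z n = f n := by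
  have hr2 := succession_rule_r2_eq hneg hpos
  have hZR := tree_zero_count_eq_mul hZ0 hR0 hR hZ
  refine eq_of_two_step_recurrence (tree_level_total_recurrence hr2 hZR hA hR) hf ?_ ?_
  · rw [hA0, hR0, hZ0, hf0]
    ring
  · rw [hA 0, hR 0, hZ 0, hA0, hR0, hf1]
    ring

/-- The numbers of nodes labelled `(a₁)`, `(r₂)`, `(0)` per level of the generating tree of
the succession rule (13) of the paper sum to the C-finite sequence with coefficients
`a₁, a₂` and default initial conditions. -/
theorem stmt_1 (a1 a2 : ℤ) (ha1 : 0 < a1)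
    (q2 r2 : ℤ)
    (hneg : a1 + a2 ≤ 0 → 0 < q2 ∧ 0 < r2 ∧ -(a1 + a2) = q2 * a1 - r2)
    (hpos : 0 < a1 + a2 → q2 = 0 ∧ r2 = a1 + a2)
    (A R Z : ℕ → ℤ)
    (hA0 : A 0 = 1) (hR0 : R 0 = 0) (hZ0 : Z 0 = 0)
    (hA : ∀ n : ℕ, A (n + 1) = (a1 - q2 - 1) * A n + (r2 - (q2 + 1) ^ 2) * R n)
    (hR : ∀ n : ℕ, R (n + 1) = A n + (q2 + 1) * R n)
    (hZ : ∀ n : ℕ, Z (n + 1) = q2 * A n + q2 * (q2 + 1) * R n)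
    (f : ℕ → ℤ) (hf0 : f 0 = 1) (hf1 : f 1 = a1)
    (hf : ∀ n : ℕ, f (n + 2) = a1 * f (n + 1) + a2 * f n) :
    ∀ n : ℕ, A n + R n + Z n = f n :=
  stmt_1_general a1 a2 q2 r2 hneg hpos A R Z hA0 hR0 hZ0 hA hR hZ f hf0 hf1 hf
end

section
/- (Positivity condition.) Let k ≥ 2 and let a_1 > 0, a_2,…,a_k be integers, with s_i = a_1 + … + a_i, and let f be the C-finite sequence with coefficients a_1,…,a_k and default initial conditions. Suppose that for each 2 ≤ i ≤ k there are integers q_i, r_i such that: if s_i ≤ 0 then q_i > 0, r_i > 0 and −s_i = q_i·a_1 − r_i; otherwise q_i = 0 and r_i = s_i. If moreover a_1 − (q_2 + 1) ≥ 0, r_i − (q_i(q_2+1) + q_{i+1} + 1) ≥ 0 for every 2 ≤ i ≤ k−1, and r_k − (q_k(q_2+1) + q_k + 1) ≥ 0, then f_n > 0 for all n ≥ 0. -/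
/-!
Put `d₀ = f₀` and `dₙ = fₙ - fₙ₋₁`, so that `fₙ = d₀ + ⋯ + dₙ`. Summation by parts turns the
recurrence into `dₙ₊₁ = ∑_{j ≤ n} (s_{min(n+1-j, k)} - 1) dⱼ`. With `c = a₁ - q₂ - 1 ≥ 0` one shows
by strong induction that `dₙ ≥ 0` and `dₙ₊₁ ≥ c dₙ`: writing `sᵢ = rᵢ - qᵢ (q₂ + 1) - qᵢ c` and
using `c dⱼ ≤ dⱼ₊₁`, the inequalities on the `rᵢ` bound `(sᵢ - 1) dⱼ`, for `i = n + 1 - j ≥ 2`,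
below by `qᵢ₊₁ dⱼ - qᵢ dⱼ₊₁` (indices beyond `k` read as `k`), and these bounds telescope to
`-q₂ dₙ`. Hence `fₙ ≥ d₀ = 1`.
-/

open Finset

section BackDiff

variable {G : Type*} [AddCommGroup G]

def backDiff (f : ℕ → G) : ℕ → G
  | 0 => f 0
  | n + 1 => f (n + 1) - f n

@[simp] lemma backDiff_zero (f : ℕ → G) : backDiff f 0 = f 0 := rfl

@[simp] lemma backDiff_succ (f : ℕ → G) (n : ℕ) : backDiff f (n + 1) = f (n + 1) - f n := rfl

lemma sum_range_backDiff (f : ℕ → G) (n : ℕ) : ∑ j ∈ range (n + 1), backDiff f j = f n := by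
  simp only [sum_range_succ', backDiff_succ, sum_range_sub, backDiff_zero, sub_add_cancel]

end BackDiff

lemma sum_Icc_mul_ite_eq_sum_range_mul_backDiff {R : Type*} [Ring R] (a f : ℕ → R) (k m : ℕ) :
    ∑ i ∈ Icc 1 k, a i * (if i ≤ m then f (m - i) else 0) =
      ∑ j ∈ range m, (∑ l ∈ Icc 1 (min (m - j) k), a l) * backDiff f j := by
  have lhs : ∀ i ∈ Icc 1 k, a i * (if i ≤ m then f (m - i) else 0) =
      ∑ j ∈ range m, if i + j ≤ m then a i * backDiff f j else 0 := by
    intro i hi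
    rw [mem_Icc] at hi
    split_ifs with him
    · rw [← sum_range_backDiff f (m - i), mul_sum, ← sum_filter]
      congr 1
      ext j
      simp only [mem_range, mem_filter]
      omega
    · rw [mul_zero, eq_comm]
      exact sum_eq_zero fun j _ => if_neg (by omega)
  have rhs : ∀ j ∈ range m, (∑ l ∈ Icc 1 (min (m - j) k), a l) * backDiff f j =
      ∑ i ∈ Icc 1 k, if i + j ≤ m then a i * backDiff f j else 0 := by
    intro j hj
    rw [sum_mul, ← sum_filter]
    congr 1
    ext i
    simp only [mem_range, mem_Icc, mem_filter] at hj ⊢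
    omega
  rw [sum_congr rfl lhs, sum_congr rfl rhs, sum_comm]

section ConvolutionRecurrence

variable {R : Type*} [CommRing R] [LinearOrder R] [IsStrictOrderedRing R]
  {d σ b : ℕ → R} {c : R}

lemma mul_le_succ_of_convolution_recurrence (hd₀ : 0 ≤ d 0)
    (hrec : ∀ n, d (n + 1) = ∑ j ∈ range (n + 1), σ (n + 1 - j) * d j)
    (hσ₁ : σ 1 = c + b 2) (hb : ∀ i, 2 ≤ i → 0 ≤ b i)
    (hσ : ∀ i, 2 ≤ i → b (i + 1) - b i * c ≤ σ i)
    (n : ℕ) (ih : ∀ j < n, 0 ≤ d j ∧ c * d j ≤ d (j + 1)) :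
    c * d n ≤ d (n + 1) := by
  have term : ∀ j ∈ range n,
      b (n + 2 - j) * d j - b (n + 1 - j) * d (j + 1) ≤ σ (n + 1 - j) * d j := by
    intro j hj
    rw [mem_range] at hj
    have hσj := hσ (n + 1 - j) (by omega)
    rw [show n + 1 - j + 1 = n + 2 - j by omega] at hσj
    calc b (n + 2 - j) * d j - b (n + 1 - j) * d (j + 1)
        ≤ b (n + 2 - j) * d j - b (n + 1 - j) * (c * d j) :=
          sub_le_sub_left (mul_le_mul_of_nonneg_left (ih j hj).2 (hb _ (by omega))) _
      _ = (b (n + 2 - j) - b (n + 1 - j) * c) * d j := by ring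
      _ ≤ σ (n + 1 - j) * d j := mul_le_mul_of_nonneg_right hσj (ih j hj).1
  have telescope : ∑ j ∈ range n, (b (n + 2 - j) * d j - b (n + 1 - j) * d (j + 1)) =
      b (n + 2) * d 0 - b 2 * d n := by
    calc _ = ∑ j ∈ range n, (b (n + 2 - j) * d j - b (n + 2 - (j + 1)) * d (j + 1)) :=
          sum_congr rfl fun j _ => by rw [show n + 2 - (j + 1) = n + 1 - j by omega]
      _ = _ := by rw [sum_range_sub']; simp
  have tail := sum_le_sum term
  rw [telescope] at tail
  rw [hrec, sum_range_succ, Nat.add_sub_cancel_left, hσ₁]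
  linarith [mul_nonneg (hb (n + 2) (by omega)) hd₀]

theorem nonneg_of_convolution_recurrence (hd₀ : 0 ≤ d 0) (hc : 0 ≤ c)
    (hrec : ∀ n, d (n + 1) = ∑ j ∈ range (n + 1), σ (n + 1 - j) * d j)
    (hσ₁ : σ 1 = c + b 2) (hb : ∀ i, 2 ≤ i → 0 ≤ b i)
    (hσ : ∀ i, 2 ≤ i → b (i + 1) - b i * c ≤ σ i) (n : ℕ) :
    0 ≤ d n := by
  have key : ∀ n, 0 ≤ d n ∧ c * d n ≤ d (n + 1) := by
    intro n
    induction n using Nat.strong_induction_on with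
    | _ n ih =>
      refine ⟨?_, mul_le_succ_of_convolution_recurrence hd₀ hrec hσ₁ hb hσ n ih⟩
      cases n with
      | zero => exact hd₀
      | succ m =>
        obtain ⟨hm, hstep⟩ := ih m m.lt_succ_self
        exact (mul_nonneg hc hm).trans hstep
  exact (key n).1

end ConvolutionRecurrence

lemma nonneg_and_eq_sub_mul_of_cases {s q r a₁ : ℤ}
    (h : (s ≤ 0 → 0 < q ∧ 0 < r ∧ -s = q * a₁ - r) ∧ (0 < s → q = 0 ∧ r = s)) :
    0 ≤ q ∧ s = r - q * a₁ := by
  rcases le_or_gt s 0 with hs | hs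
  · obtain ⟨hq, -, he⟩ := h.1 hs
    exact ⟨hq.le, by linarith⟩
  · obtain ⟨rfl, rfl⟩ := h.2 hs
    simp

theorem stmt_3_general (k : ℕ) (hk : 2 ≤ k) (a : ℕ → ℤ)
    (s : ℕ → ℤ) (hs : ∀ i, s i = ∑ l ∈ Finset.Icc 1 i, a l)
    (f : ℕ → ℤ) (hf0 : f 0 = 1)
    (hf : ∀ n : ℕ, 1 ≤ n →
      f n = ∑ i ∈ Finset.Icc 1 k, a i * (if i ≤ n then f (n - i) else 0))
    (q r : ℕ → ℤ)
    (hqr : ∀ i, 2 ≤ i → i ≤ k →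
      (s i ≤ 0 → 0 < q i ∧ 0 < r i ∧ -(s i) = q i * a 1 - r i) ∧
      (0 < s i → q i = 0 ∧ r i = s i))
    (h1 : 0 ≤ a 1 - (q 2 + 1))
    (hmid : ∀ i, 2 ≤ i → i ≤ k - 1 → 0 ≤ r i - (q i * (q 2 + 1) + q (i + 1) + 1))
    (hlast : 0 ≤ r k - (q k * (q 2 + 1) + q k + 1)) :
    ∀ n : ℕ, 0 < f n := by
  have hqr' i (h2 : 2 ≤ i) (hik : i ≤ k) := nonneg_and_eq_sub_mul_of_cases (hqr i h2 hik)
  have hrec (n : ℕ) : backDiff f (n + 1) =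
      ∑ j ∈ range (n + 1), (s (min (n + 1 - j) k) - 1) * backDiff f j := by
    rw [backDiff_succ, hf (n + 1) n.succ_pos, sum_Icc_mul_ite_eq_sum_range_mul_backDiff,
      ← sum_range_backDiff f n, ← sum_sub_distrib]
    simp only [hs, sub_mul, one_mul]
  have hσ i (h2 : 2 ≤ i) :
      q (min (i + 1) k) - q (min i k) * (a 1 - q 2 - 1) ≤ s (min i k) - 1 := by
    rcases lt_or_ge i k with hik | hik
    · rw [min_eq_left hik.le, min_eq_left hik, (hqr' i h2 hik.le).2]
      linarith [hmid i h2 (by omega)]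
    · rw [min_eq_right hik, min_eq_right (by omega), (hqr' k hk le_rfl).2]
      linarith
  have hd := nonneg_of_convolution_recurrence (by simp [hf0]) (by linarith) hrec
    (by rw [min_eq_left (by omega), min_eq_left hk, hs, Icc_self, sum_singleton]; ring)
    (fun i h2 => (hqr' _ (le_min h2 hk) (min_le_right _ _)).1) hσ
  intro n
  rw [← sum_range_backDiff f n]
  calc (0 : ℤ) < backDiff f 0 := by simp [hf0]
    _ ≤ _ := single_le_sum (fun j _ => hd j) (mem_range.mpr n.succ_pos)

/-- Positivity condition: if the system of inequalities (16) of the paper holds, then all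
terms of the C-finite sequence with coefficients `a₁, …, a_k` and default initial
conditions are positive. -/
theorem stmt_3 (k : ℕ) (hk : 2 ≤ k) (a : ℕ → ℤ) (ha1 : 0 < a 1)
    (s : ℕ → ℤ) (hs : ∀ i, s i = ∑ l ∈ Finset.Icc 1 i, a l)
    (f : ℕ → ℤ) (hf0 : f 0 = 1)
    (hf : ∀ n : ℕ, 1 ≤ n →
      f n = ∑ i ∈ Finset.Icc 1 k, a i * (if i ≤ n then f (n - i) else 0))
    (q r : ℕ → ℤ)
    (hqr : ∀ i, 2 ≤ i → i ≤ k →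
      (s i ≤ 0 → 0 < q i ∧ 0 < r i ∧ -(s i) = q i * a 1 - r i) ∧
      (0 < s i → q i = 0 ∧ r i = s i))
    (h1 : 0 ≤ a 1 - (q 2 + 1))
    (hmid : ∀ i, 2 ≤ i → i ≤ k - 1 → 0 ≤ r i - (q i * (q 2 + 1) + q (i + 1) + 1))
    (hlast : 0 ≤ r k - (q k * (q 2 + 1) + q k + 1)) :
    ∀ n : ℕ, 0 < f n :=
  stmt_3_general k hk a s hs f hf0 hf q r hqr h1 hmid hlast
end

section
/- Let a_1 > 0 and a_2 be integers. There exists an integer q_2 with 0 ≤ q_2 ≤ a_1 − 1 and q_2² + (2 − a_1)·q_2 + 1 − a_1 − a_2 ≤ 0 if and only if a_1² + 4·a_2 ≥ 0. -/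
/-!
Multiplying by 4 and completing the square turns the inequality into
`(2 (q₂ + 1) - a₁)² ≤ a₁² + 4 a₂`, so it forces `a₁² + 4 a₂ ≥ 0`. Conversely, taking
`q₂ + 1 = ⌈a₁ / 2⌉` makes the left side `(a₁ mod 2)²`, and when `a₁` is odd so is
`a₁² + 4 a₂`, which being nonnegative is then at least `1`.
-/

theorem quadratic_nonpos_iff_sq_le (a1 a2 q : ℤ) :
    q ^ 2 + (2 - a1) * q + 1 - a1 - a2 ≤ 0 ↔ (2 * (q + 1) - a1) ^ 2 ≤ a1 ^ 2 + 4 * a2 := by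
  have completed_square :
      4 * (q ^ 2 + (2 - a1) * q + 1 - a1 - a2) = (2 * (q + 1) - a1) ^ 2 - (a1 ^ 2 + 4 * a2) := by
    ring
  omega

theorem one_le_sq_add_four_mul_of_odd {a1 a2 : ℤ} (ha1 : Odd a1) (h : 0 ≤ a1 ^ 2 + 4 * a2) :
    1 ≤ a1 ^ 2 + 4 * a2 := by
  have hodd : Odd (a1 ^ 2 + 4 * a2) := ha1.pow.add_even ⟨2 * a2, by ring⟩
  have := Int.odd_iff.mp hodd
  omega

/-- For a degree-2 recurrence with `a₁ > 0`, the positivity condition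
`q₂² + (2 − a₁)q₂ + 1 − a₁ − a₂ ≤ 0` is satisfiable for some `0 ≤ q₂ ≤ a₁ − 1`
if and only if `a₁² + 4a₂ ≥ 0`. -/
theorem stmt_4 (a1 a2 : ℤ) (ha1 : 0 < a1) :
    (∃ q2 : ℤ, 0 ≤ q2 ∧ q2 ≤ a1 - 1 ∧
      q2 ^ 2 + (2 - a1) * q2 + 1 - a1 - a2 ≤ 0) ↔ a1 ^ 2 + 4 * a2 ≥ 0 := by
  constructor
  · rintro ⟨q2, -, -, hq⟩
    exact (sq_nonneg _).trans ((quadratic_nonpos_iff_sq_le a1 a2 q2).mp hq)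
  · intro h
    refine ⟨(a1 - 1) / 2, by omega, by omega, (quadratic_nonpos_iff_sq_le _ _ _).mpr ?_⟩
    rcases Int.even_or_odd a1 with heven | hodd
    · have : 2 * ((a1 - 1) / 2 + 1) - a1 = 0 := by have := Int.even_iff.mp heven; omega
      simpa [this] using h
    · have : 2 * ((a1 - 1) / 2 + 1) - a1 = 1 := by have := Int.odd_iff.mp hodd; omega
      simpa [this] using one_le_sq_add_four_mul_of_odd hodd h
end

section
/- Let a_1 > 0 and a_2 be integers and let f : ℕ → ℤ be defined by f_0 = 1, f_1 = a_1, and f_n = a_1 f_{n−1} + a_2 f_{n−2} for n ≥ 2. Then f_n > 0 for all n ≥ 0 if and only if a_1² + 4·a_2 ≥ 0. -/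
/-!
If `a₁² + 4a₂ ≥ 0`, induction on `0 < fₙ ∧ a₁ fₙ ≤ 2 fₙ₊₁` keeps every term positive.

If `D = a₁² + 4a₂ < 0` while all terms are positive, the ratios `rₙ = fₙ₊₁ / fₙ` satisfy
`rₙ₊₁ = a₁ + a₂ / rₙ` and `rₙ ≤ a₁`, and completing the square shows
`rₙ₊₁ ≤ rₙ + D / (4a₁)`. So `rₙ ≤ a₁ + n D / (4a₁)`, which is eventually negative.
With denominators cleared this reads `4a₁ fₙ₊₁ ≤ (4a₁² + nD) fₙ`.
-/

section Recurrence

variable {R : Type*} [CommRing R] [LinearOrder R] [IsStrictOrderedRing R]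
  {a1 a2 : R} {f : ℕ → R}

theorem pos_of_discrim_nonneg (ha1 : 0 < a1) (hD : 0 ≤ a1 ^ 2 + 4 * a2)
    (hf : ∀ n, f (n + 2) = a1 * f (n + 1) + a2 * f n)
    (h0 : 0 < f 0) (h1 : a1 * f 0 ≤ 2 * f 1) (n : ℕ) : 0 < f n := by
  suffices ∀ n, 0 < f n ∧ a1 * f n ≤ 2 * f (n + 1) from (this n).1
  intro n
  induction n with
  | zero => exact ⟨h0, h1⟩
  | succ n ih =>
    obtain ⟨hpos, hratio⟩ := ih
    have hpos' : 0 < f (n + 1) := by nlinarith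
    refine ⟨hpos', ?_⟩
    rw [hf n]
    nlinarith

/-- With `x = fₙ`, `y = fₙ₊₁` this is the ratio step `rₙ₊₁ ≤ rₙ + D / (4a₁)`;
the slack is `a₁ (2y - a₁x)²`. -/
theorem recurrence_mul_le_of_discrim_nonpos {x y : R} (ha1 : 0 ≤ a1)
    (hD : a1 ^ 2 + 4 * a2 ≤ 0) (hx : 0 ≤ x) (hyx : y ≤ a1 * x) :
    4 * a1 * (a1 * y + a2 * x) * x ≤ 4 * a1 * y ^ 2 + (a1 ^ 2 + 4 * a2) * x * y := by
  have hsq : 0 ≤ a1 * (2 * y - a1 * x) ^ 2 := by positivity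
  have hprod : 0 ≤ (a1 ^ 2 + 4 * a2) * (x * (y - a1 * x)) :=
    mul_nonneg_of_nonpos_of_nonpos hD (mul_nonpos_of_nonneg_of_nonpos hx (by linarith))
  nlinarith

theorem four_mul_succ_le_of_discrim_nonpos (ha1 : 0 < a1) (hD : a1 ^ 2 + 4 * a2 ≤ 0)
    (hf : ∀ n, f (n + 2) = a1 * f (n + 1) + a2 * f n) (hpos : ∀ n, 0 < f n)
    (h1 : f 1 ≤ a1 * f 0) (n : ℕ) :
    4 * a1 * f (n + 1) ≤ (4 * a1 ^ 2 + n * (a1 ^ 2 + 4 * a2)) * f n := by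
  induction n with
  | zero =>
    simp only [CharP.cast_eq_zero, zero_mul, add_zero]
    nlinarith
  | succ n ih =>
    have hle : f (n + 1) ≤ a1 * f n := by
      have : (n : R) * (a1 ^ 2 + 4 * a2) * f n ≤ 0 :=
        mul_nonpos_of_nonpos_of_nonneg
          (mul_nonpos_of_nonneg_of_nonpos n.cast_nonneg hD) (hpos n).le
      nlinarith
    have hstep := recurrence_mul_le_of_discrim_nonpos ha1.le hD (hpos n).le hle
    rw [← hf n] at hstep
    have hcleared : 4 * a1 * f (n + 2) * f n
        ≤ (4 * a1 ^ 2 + (n + 1) * (a1 ^ 2 + 4 * a2)) * f (n + 1) * f n :=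
      calc 4 * a1 * f (n + 2) * f n
          ≤ f (n + 1) * (4 * a1 * f (n + 1) + (a1 ^ 2 + 4 * a2) * f n) := by linarith
        _ ≤ f (n + 1) *
              ((4 * a1 ^ 2 + n * (a1 ^ 2 + 4 * a2)) * f n + (a1 ^ 2 + 4 * a2) * f n) := by
          gcongr
          exact (hpos (n + 1)).le
        _ = (4 * a1 ^ 2 + (n + 1) * (a1 ^ 2 + 4 * a2)) * f (n + 1) * f n := by ring
    push_cast
    exact le_of_mul_le_mul_right hcleared (hpos n)

theorem not_forall_pos_of_discrim_neg [Archimedean R] (ha1 : 0 < a1)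
    (hD : a1 ^ 2 + 4 * a2 < 0) (hf : ∀ n, f (n + 2) = a1 * f (n + 1) + a2 * f n)
    (h1 : f 1 ≤ a1 * f 0) : ¬ ∀ n, 0 < f n := by
  intro hpos
  obtain ⟨n, hn⟩ := Archimedean.arch (4 * a1 ^ 2) (neg_pos.mpr hD)
  rw [nsmul_eq_mul] at hn
  have hbound := four_mul_succ_le_of_discrim_nonpos ha1 hD.le hf hpos h1 n
  have : (4 * a1 ^ 2 + n * (a1 ^ 2 + 4 * a2)) * f n ≤ 0 :=
    mul_nonpos_of_nonpos_of_nonneg (by linarith) (hpos n).le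
  nlinarith [mul_pos ha1 (hpos (n + 1))]

end Recurrence

/-- For the degree-2 C-finite sequence with `a₁ > 0` and default initial conditions,
all terms are positive if and only if `a₁² + 4a₂ ≥ 0`. -/
theorem stmt_5 (a1 a2 : ℤ) (ha1 : 0 < a1) (f : ℕ → ℤ)
    (hf0 : f 0 = 1) (hf1 : f 1 = a1)
    (hf : ∀ n : ℕ, f (n + 2) = a1 * f (n + 1) + a2 * f n) :
    (∀ n : ℕ, 0 < f n) ↔ a1 ^ 2 + 4 * a2 ≥ 0 := by
  have h1 : f 1 = a1 * f 0 := by rw [hf0, hf1, mul_one]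
  constructor
  · intro hpos
    by_contra hD
    exact not_forall_pos_of_discrim_neg ha1 (not_le.mp hD) hf h1.le hpos
  · intro hD
    exact pos_of_discrim_nonneg ha1 hD hf (by rw [hf0]; exact one_pos)
      (by rw [hf0, hf1]; linarith)
end

section
/- Let k ≥ 2, let a_1,…,a_k be integers, and let h_1,…,h_{k−1} be integers. Let f : ℕ → ℤ satisfy f_0 = 1, f_i = h_i for 1 ≤ i ≤ k−1, and f_n = Σ_{i=1}^{k} a_i f_{n−i} for n ≥ k. Define c : ℕ → ℤ by c_1 = h_1; c_i = h_i − Σ_{j=1}^{i−1} h_j·a_{i−j} for 2 ≤ i ≤ k−1; c_k = a_k; and c_n = 0 for n = 0 and n > k. Define g : ℕ → ℤ (the net number of (a_1)-labelled nodes at each level of the generating tree of the extended succession rule in which the root, labelled (h_1), produces c_i copies of (a_1) at level i for 1 ≤ i ≤ k, and every (a_1)-node at level n produces a_i copies of (a_1) at level n+i for 1 ≤ i ≤ k, negative multiplicities being marked labels counted with sign) by g_0 = 0 and, for n ≥ 1, g_n = c_n + Σ_{i=1}^{k} a_i·g_{n−i}, where any g_m with m < 0 is taken to be 0. Then g_n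 = f_n for every n ≥ 1. -/
/-!
With `A(t) = ∑_{i=1}^k a i tⁱ` and `C(t) = ∑_{n ≥ 1} c n tⁿ`, the definition of `c` says exactly
that `C = (1 - A) (F - 1)`, the value `c k = a k` coming from `f 0 = 1`. Read coefficientwise,
both `f` and `g` satisfy `x n = c n + ∑_{1 ≤ i ≤ k, i < n} a i * x (n - i)` for `n ≥ 1`
(for `g` the term `i = n` of its recurrence vanishes since `g 0 = 0`), and this recurrence
determines `x n` for all `n ≥ 1`.
-/

open Finset

def IsForcedRecurrence {R : Type*} [NonUnitalNonAssocSemiring R] (k : ℕ) (a c x : ℕ → R) :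
    Prop :=
  ∀ n, 1 ≤ n → x n = c n + ∑ i ∈ Icc 1 k with i < n, a i * x (n - i)

theorem IsForcedRecurrence.unique {R : Type*} [NonUnitalNonAssocSemiring R] {k : ℕ}
    {a c x y : ℕ → R}
    (hx : IsForcedRecurrence k a c x) (hy : IsForcedRecurrence k a c y) :
    ∀ n, 1 ≤ n → x n = y n := by
  intro n
  induction n using Nat.strong_induction_on with
  | _ n ih =>
    intro hn
    rw [hx n hn, hy n hn]
    congr 1
    refine sum_congr rfl fun i hi => ?_
    simp only [mem_filter, mem_Icc] at hi
    rw [ih (n - i) (by omega) (by omega)]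

theorem isForcedRecurrence_of_eq_add_sum_ite {R : Type*} [NonUnitalNonAssocSemiring R] {k : ℕ}
    {a c x : ℕ → R} (hx0 : x 0 = 0)
    (hx : ∀ n, 1 ≤ n → x n = c n + ∑ i ∈ Icc 1 k, a i * (if i ≤ n then x (n - i) else 0)) :
    IsForcedRecurrence k a c x := by
  intro n hn
  rw [hx n hn, sum_filter]
  congr 1
  refine sum_congr rfl fun i _ => ?_
  by_cases hin : i < n
  · rw [if_pos hin.le, if_pos hin]
  · rw [if_neg hin]
    split_ifs with hin'
    · rw [show n - i = 0 by omega, hx0, mul_zero]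
    · rw [mul_zero]

theorem sum_Ico_one_mul_sub_comm {R : Type*} [CommSemiring R] (a b : ℕ → R) (n : ℕ) :
    ∑ i ∈ Ico 1 n, a i * b (n - i) = ∑ i ∈ Ico 1 n, b i * a (n - i) := by
  refine sum_nbij' (n - ·) (n - ·) ?_ ?_ ?_ ?_ ?_ <;> intro i hi <;> simp only [mem_Ico] at hi
  · simp only [mem_Ico]; omega
  · simp only [mem_Ico]; omega
  · omega
  · omega
  · rw [show n - (n - i) = i by omega, mul_comm]

section CFinite

variable {R : Type*} [CommRing R] {k : ℕ} {a h f c : ℕ → R}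

theorem eq_sub_sum_Ico_of_lt (hc1 : c 1 = h 1)
    (hci : ∀ i, 2 ≤ i → i ≤ k - 1 → c i = h i - ∑ j ∈ Icc 1 (i - 1), h j * a (i - j))
    {n : ℕ} (hn : 1 ≤ n) (hnk : n ≤ k - 1) :
    c n = h n - ∑ j ∈ Ico 1 n, h j * a (n - j) := by
  obtain rfl | hn2 := eq_or_lt_of_le hn
  · simp [hc1]
  · rw [hci n hn2 hnk, Icc_sub_one_right_eq_Ico_of_not_isMin (by simp; omega)]

theorem isForcedRecurrence_of_cFinite (hf0 : f 0 = 1)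
    (hfi : ∀ i, 1 ≤ i → i ≤ k - 1 → f i = h i)
    (hf : ∀ n, k ≤ n → f n = ∑ i ∈ Icc 1 k, a i * f (n - i))
    (hc1 : c 1 = h 1)
    (hci : ∀ i, 2 ≤ i → i ≤ k - 1 → c i = h i - ∑ j ∈ Icc 1 (i - 1), h j * a (i - j))
    (hck : c k = a k) (hcbig : ∀ n, k < n → c n = 0) :
    IsForcedRecurrence k a c f := by
  intro n hn
  rcases lt_trichotomy n k with hnk | rfl | hnk
  · have hfilter : {i ∈ Icc 1 k | i < n} = Ico 1 n := by
      ext i; simp only [mem_filter, mem_Icc, mem_Ico]; omega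
    have hsum : ∑ i ∈ Ico 1 n, a i * f (n - i) = ∑ i ∈ Ico 1 n, a i * h (n - i) :=
      sum_congr rfl fun i hi => by
        simp only [mem_Ico] at hi
        rw [hfi (n - i) (by omega) (by omega)]
    rw [hfilter, hsum, sum_Ico_one_mul_sub_comm, eq_sub_sum_Ico_of_lt hc1 hci hn (by omega),
      hfi n hn (by omega), sub_add_cancel]
  · have hfilter : {i ∈ Icc 1 n | i < n} = Ico 1 n := by
      ext i; simp only [mem_filter, mem_Icc, mem_Ico]; omega
    rw [hfilter, hf n le_rfl, ← Ico_insert_right hn, sum_insert right_notMem_Ico, Nat.sub_self,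
      hf0, mul_one, hck]
  · have hfilter : {i ∈ Icc 1 k | i < n} = Icc 1 k := by
      ext i; simp only [mem_filter, mem_Icc]; omega
    rw [hfilter, hcbig n hnk, zero_add, hf n hnk.le]

end CFinite

theorem stmt_6_general (k : ℕ) (a h : ℕ → ℤ)
    (f : ℕ → ℤ) (hf0 : f 0 = 1)
    (hfi : ∀ i, 1 ≤ i → i ≤ k - 1 → f i = h i)
    (hf : ∀ n : ℕ, k ≤ n → f n = ∑ i ∈ Finset.Icc 1 k, a i * f (n - i))
    (c : ℕ → ℤ) (hc1 : c 1 = h 1)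
    (hci : ∀ i, 2 ≤ i → i ≤ k - 1 →
      c i = h i - ∑ j ∈ Finset.Icc 1 (i - 1), h j * a (i - j))
    (hck : c k = a k)
    (hcbig : ∀ n : ℕ, k < n → c n = 0)
    (g : ℕ → ℤ) (hg0 : g 0 = 0)
    (hg : ∀ n : ℕ, 1 ≤ n →
      g n = c n + ∑ i ∈ Finset.Icc 1 k, a i * (if i ≤ n then g (n - i) else 0)) :
    ∀ n : ℕ, 1 ≤ n → g n = f n :=
  (isForcedRecurrence_of_eq_add_sum_ite hg0 hg).unique
    (isForcedRecurrence_of_cFinite hf0 hfi hf hc1 hci hck hcbig)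

/-- Generic initial conditions: the net number `g` of `(a₁)`-labelled nodes per level of
the extended succession rule (17) of the paper equals the C-finite sequence `f` with
coefficients `a₁, …, a_k` and initial conditions `f₀ = 1`, `f_i = h_i`. -/
theorem stmt_6 (k : ℕ) (hk : 2 ≤ k) (a h : ℕ → ℤ)
    (f : ℕ → ℤ) (hf0 : f 0 = 1)
    (hfi : ∀ i, 1 ≤ i → i ≤ k - 1 → f i = h i)
    (hf : ∀ n : ℕ, k ≤ n → f n = ∑ i ∈ Finset.Icc 1 k, a i * f (n - i))
    (c : ℕ → ℤ) (hc0 : c 0 = 0) (hc1 : c 1 = h 1)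
    (hci : ∀ i, 2 ≤ i → i ≤ k - 1 →
      c i = h i - ∑ j ∈ Finset.Icc 1 (i - 1), h j * a (i - j))
    (hck : c k = a k)
    (hcbig : ∀ n : ℕ, k < n → c n = 0)
    (g : ℕ → ℤ) (hg0 : g 0 = 0)
    (hg : ∀ n : ℕ, 1 ≤ n →
      g n = c n + ∑ i ∈ Finset.Icc 1 k, a i * (if i ≤ n then g (n - i) else 0)) :
    ∀ n : ℕ, 1 ≤ n → g n = f n :=
  stmt_6_general k a h f hf0 hfi hf c hc1 hci hck hcbig g hg0 hg
end

section
/- Let k ≥ 2 and let a_1,…,a_k be integers, s_j = a_1 + … + a_j. Define A_1,…,A_k : ℕ → ℤ by A_1(0)=1, A_j(0)=0 for 2 ≤ j ≤ k, and for n ≥ 0: A_1(n+1) = Σ_{j=1}^{k} (s_j − 1)·A_j(n); A_{j+1}(n+1) = A_j(n) for 1 ≤ j ≤ k−2; A_k(n+1) = A_{k−1}(n) + A_k(n). Then for every n ≥ 0, A_1(n) = f_n − f_{n−1}, where f is the C-finite sequence with coefficients a_1,…,a_k and default initial conditions and f_{−1} = 0. (Equivalently, the generating function of A_1 is (1−x)/(1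 − a_1 x − a_2 x² − … − a_k x^k).) -/
/-!
Set `f_m = 0` for `m < 0`. By induction on `n`, level `n` of the tree satisfies
`A_j(n) = f_{n-j+1} - f_{n-j}` for `j < k` and `A_k(n) = f_{n-k+1}`, so the tail sums
`A_l(n) + … + A_k(n)` telescope to `f_{n+1-l}`. Writing `s_j - 1 = a_1 + … + a_j - 1` and
exchanging the order of summation turns the rule for `A_1(n+1)` into
`∑_l a_l f_{n+1-l} - f_n = f_{n+1} - f_n`, which propagates the formula to level `n + 1`.
-/

open Finset

def lagged (f : ℕ → ℤ) (n j : ℕ) : ℤ := if j ≤ n then f (n - j) else 0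

@[simp]
lemma lagged_zero_right (f : ℕ → ℤ) (n : ℕ) : lagged f n 0 = f n := by
  simp [lagged]

@[simp]
lemma lagged_zero_left (f : ℕ → ℤ) (j : ℕ) : lagged f 0 j = if j = 0 then f 0 else 0 := by
  simp [lagged]

@[simp]
lemma lagged_succ_succ (f : ℕ → ℤ) (n j : ℕ) : lagged f (n + 1) (j + 1) = lagged f n j := by
  simp [lagged]

theorem sum_Icc_prefix_mul {R : Type*} [NonUnitalNonAssocSemiring R] (a b : ℕ → R) (m k : ℕ) :
    ∑ j ∈ Icc m k, (∑ l ∈ Icc m j, a l) * b j = ∑ l ∈ Icc m k, a l * ∑ j ∈ Icc l k, b j := by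
  simp_rw [sum_mul, mul_sum]
  exact sum_comm' fun j l => by simp only [mem_Icc]; omega

theorem sum_Icc_eq_of_telescoping {M : Type*} [AddCommGroup M] {b c : ℕ → M} {l k : ℕ}
    (hlk : l ≤ k) (hb : ∀ j ∈ Ico l k, b j = c j - c (j + 1)) (hbk : b k = c k) :
    ∑ j ∈ Icc l k, b j = c l := by
  rw [← Ico_add_one_right_eq_Icc, sum_Ico_succ_top hlk, sum_congr rfl hb, hbk]
  have := sum_Ico_sub (fun j => -c j) hlk
  simp only [sub_neg_eq_add, neg_add_eq_sub] at this
  rw [this]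
  abel

def LevelFormula (k : ℕ) (f : ℕ → ℤ) (A : ℕ → ℕ → ℤ) (n : ℕ) : Prop :=
  (∀ j, 1 ≤ j → j < k → A j n = lagged f n (j - 1) - lagged f n j) ∧
    A k n = lagged f n (k - 1)

namespace LevelFormula

variable {k : ℕ} {f : ℕ → ℤ} {A : ℕ → ℕ → ℤ} {n : ℕ}

theorem sum_Icc (h : LevelFormula k f A n) {l : ℕ} (hl : 1 ≤ l) (hlk : l ≤ k) :
    ∑ j ∈ Icc l k, A j n = lagged f (n + 1) l := by
  obtain ⟨l, rfl⟩ : ∃ i, l = i + 1 := ⟨l - 1, by omega⟩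
  rw [lagged_succ_succ]
  refine sum_Icc_eq_of_telescoping (c := fun j => lagged f n (j - 1)) hlk (fun j hj => ?_) h.2
  simp only [mem_Ico] at hj
  simpa using h.1 j (by omega) hj.2

theorem zero (hk : 2 ≤ k) (hf0 : f 0 = 1) (hA10 : A 1 0 = 1)
    (hAj0 : ∀ j, 2 ≤ j → j ≤ k → A j 0 = 0) : LevelFormula k f A 0 := by
  refine ⟨fun j hj hjk => ?_, ?_⟩
  · rcases hj.eq_or_lt with rfl | hj
    · simp [hA10, hf0]
    · simp [hAj0 j hj hjk.le, show j ≠ 0 by omega, show j - 1 ≠ 0 by omega]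
  · simp [hAj0 k hk le_rfl, show k - 1 ≠ 0 by omega]

theorem A_one_succ (h : LevelFormula k f A n) (hk : 1 ≤ k) {a s : ℕ → ℤ}
    (hf : ∀ n : ℕ, 1 ≤ n →
      f n = ∑ i ∈ Icc 1 k, a i * (if i ≤ n then f (n - i) else 0))
    (hs : ∀ j, s j = ∑ l ∈ Icc 1 j, a l)
    (hA1 : ∀ n : ℕ, A 1 (n + 1) = ∑ j ∈ Icc 1 k, (s j - 1) * A j n) :
    A 1 (n + 1) = f (n + 1) - f n :=
  calc A 1 (n + 1)
      = ∑ j ∈ Icc 1 k, (∑ l ∈ Icc 1 j, a l) * A j n - ∑ j ∈ Icc 1 k, A j n := by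
        simp only [hA1, hs, sub_mul, one_mul, sum_sub_distrib]
    _ = ∑ l ∈ Icc 1 k, a l * lagged f (n + 1) l - f n := by
        rw [sum_Icc_prefix_mul, h.sum_Icc le_rfl hk, lagged_succ_succ, lagged_zero_right]
        congr 1
        refine sum_congr rfl fun l hl => ?_
        rw [mem_Icc] at hl
        rw [h.sum_Icc hl.1 hl.2]
    _ = f (n + 1) - f n := by rw [hf (n + 1) n.succ_pos]; rfl

theorem succ (h : LevelFormula k f A n) (hk : 2 ≤ k) {a s : ℕ → ℤ}
    (hf : ∀ n : ℕ, 1 ≤ n →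
      f n = ∑ i ∈ Icc 1 k, a i * (if i ≤ n then f (n - i) else 0))
    (hs : ∀ j, s j = ∑ l ∈ Icc 1 j, a l)
    (hA1 : ∀ n : ℕ, A 1 (n + 1) = ∑ j ∈ Icc 1 k, (s j - 1) * A j n)
    (hAmid : ∀ n : ℕ, ∀ j, 1 ≤ j → j ≤ k - 2 → A (j + 1) (n + 1) = A j n)
    (hAk : ∀ n : ℕ, A k (n + 1) = A (k - 1) n + A k n) :
    LevelFormula k f A (n + 1) := by
  obtain ⟨m, rfl⟩ : ∃ m, k = m + 2 := ⟨k - 2, by omega⟩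
  refine ⟨fun j hj hjk => ?_, ?_⟩
  · rcases hj.eq_or_lt with rfl | hj
    · simp [h.A_one_succ (by omega) hf hs hA1]
    · obtain ⟨i, rfl⟩ : ∃ i, j = i + 2 := ⟨j - 2, by omega⟩
      rw [hAmid n (i + 1) (by omega) (by omega), h.1 (i + 1) (by omega) (by omega)]
      simp
  · rw [hAk, h.2, show m + 2 - 1 = m + 1 by omega, h.1 (m + 1) (by omega) (by omega)]
    simp

end LevelFormula

/-- The number `A₁(n)` of nodes labelled `(s₁)` at level `n` of the generating tree of the
succession rule (9) of the paper equals `f_n − f_{n−1}` (with `f_{−1} = 0`), where `f` is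
the C-finite sequence with coefficients `a₁, …, a_k` and default initial conditions. -/
theorem stmt_7 (k : ℕ) (hk : 2 ≤ k) (a : ℕ → ℤ)
    (f : ℕ → ℤ) (hf0 : f 0 = 1)
    (hf : ∀ n : ℕ, 1 ≤ n →
      f n = ∑ i ∈ Finset.Icc 1 k, a i * (if i ≤ n then f (n - i) else 0))
    (s : ℕ → ℤ) (hs : ∀ j, s j = ∑ l ∈ Finset.Icc 1 j, a l)
    (A : ℕ → ℕ → ℤ)
    (hA10 : A 1 0 = 1)
    (hAj0 : ∀ j, 2 ≤ j → j ≤ k → A j 0 = 0)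
    (hA1 : ∀ n : ℕ, A 1 (n + 1) = ∑ j ∈ Finset.Icc 1 k, (s j - 1) * A j n)
    (hAmid : ∀ n : ℕ, ∀ j, 1 ≤ j → j ≤ k - 2 → A (j + 1) (n + 1) = A j n)
    (hAk : ∀ n : ℕ, A k (n + 1) = A (k - 1) n + A k n) :
    ∀ n : ℕ, A 1 n = f n - (if 1 ≤ n then f (n - 1) else 0) := by
  have level : ∀ n, LevelFormula k f A n := by
    intro n
    induction n with
    | zero => exact .zero hk hf0 hA10 hAj0
    | succ n ih => exact ih.succ hk hf hs hA1 hAmid hAk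
  intro n
  simpa [lagged] using (level n).1 1 le_rfl (by omega)
end

section
/- Let k ≥ 2 and let a_1,…,a_k be integers, s_j = a_1 + … + a_j. Define A_1,…,A_k : ℕ → ℤ by A_1(0)=1, A_j(0)=0 for 2 ≤ j ≤ k, and for n ≥ 0: A_1(n+1) = Σ_{j=1}^{k} (s_j − 1)·A_j(n); A_{j+1}(n+1) = A_j(n) for 1 ≤ j ≤ k−2; A_k(n+1) = A_{k−1}(n) + A_k(n). Let f be the C-finite sequence with coefficients a_1,…,a_k and default initial conditions, with the convention f_m = 0 for m < 0. Then for every n ≥ 0: A_j(n) = f_{n−j+1} − f_{n−j} for all 2 ≤ j ≤ k−1, and A_k(n) = f_{n−k+1}. (Equivalently, A_j(x) = x^{j−1}·A_1(x) for 2 ≤ j ≤ k−1 and A_k(x) = x^{k−1}/(1−x)·A_1(x), where A_1(x) = (1−x)/(1 − a_1 x − … − a_k x^k).) -/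
/-!
Writing `A_j(n) = f_{n+1-j} - f_{n-j}` also for `j = 1`, the closed forms say that the labels at
level `n` are the consecutive differences of `f_{n+1-1}, …, f_{n+1-k}`, the last one undifferenced.
So `∑_{j ≥ l} A_j(n) = f_{n+1-l}`, and the rule for `A_1`, after exchanging the sums in
`∑_j s_j A_j(n) = ∑_l a_l ∑_{j ≥ l} A_j(n)`, becomes `A_1(n+1) = f_{n+1} - f_n` by the
recurrence of `f`. The other labels are shifted from the previous level, which preserves the
closed forms, so they propagate by induction on `n`.
-/

open Finset

/-- `lag f m j` is `f_{m-j}` with the convention `f_i = 0` for `i < 0`, which truncated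
subtraction alone would not give. -/
def lag {M : Type*} [Zero M] (f : ℕ → M) (m j : ℕ) : M := if j ≤ m then f (m - j) else 0

section lag

variable {M : Type*} [Zero M] (f : ℕ → M)

@[simp]
theorem lag_succ_succ (m j : ℕ) : lag f (m + 1) (j + 1) = lag f m j := by
  simp only [lag, Nat.add_le_add_iff_right, Nat.add_sub_add_right]

theorem lag_self (m : ℕ) : lag f m m = f 0 := by
  simp [lag]

theorem lag_of_lt {m j : ℕ} (h : m < j) : lag f m j = 0 :=
  if_neg (Nat.not_le.mpr h)

end lag

theorem Finset.sum_Icc_eq_of_eq_sub_succ {G : Type*} [AddCommGroup G] {b c : ℕ → G} {l k : ℕ}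
    (hlk : l ≤ k) (hb : ∀ j ∈ Ico l k, b j = c j - c (j + 1)) (hbk : b k = c k) :
    ∑ j ∈ Icc l k, b j = c l := by
  have htele : ∑ j ∈ Ico l k, (c j - c (j + 1)) = c l - c k := by
    rw [← neg_sub, ← sum_Ico_sub c hlk, ← sum_neg_distrib]
    exact sum_congr rfl fun j _ => (neg_sub _ _).symm
  rw [← Ico_insert_right hlk, sum_insert right_notMem_Ico, sum_congr rfl hb, htele, hbk]
  abel

theorem Finset.sum_Icc_sum_Icc_mul {R : Type*} [NonUnitalNonAssocSemiring R] (a b : ℕ → R)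
    (p k : ℕ) :
    ∑ j ∈ Icc p k, (∑ l ∈ Icc p j, a l) * b j = ∑ l ∈ Icc p k, a l * ∑ j ∈ Icc l k, b j := by
  simp_rw [sum_mul, mul_sum]
  exact sum_comm' fun j l => by simp only [mem_Icc]; omega

def ClosedFormAt (k : ℕ) (f : ℕ → ℤ) (A : ℕ → ℕ → ℤ) (n : ℕ) : Prop :=
  (∀ j, 1 ≤ j → j < k → A j n = lag f (n + 1) j - lag f (n + 1) (j + 1)) ∧
    A k n = lag f (n + 1) k

section ClosedFormAt

variable {k : ℕ} {f : ℕ → ℤ} {A : ℕ → ℕ → ℤ}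

theorem closedFormAt_zero (hk : 2 ≤ k) (hf0 : f 0 = 1) (hA10 : A 1 0 = 1)
    (hAj0 : ∀ j, 2 ≤ j → j ≤ k → A j 0 = 0) : ClosedFormAt k f A 0 := by
  refine ⟨fun j hj hjk => ?_, ?_⟩
  · obtain rfl | hj2 := eq_or_lt_of_le hj
    · rw [hA10, lag_self, hf0, lag_of_lt f (by norm_num), sub_zero]
    · rw [hAj0 j hj2 hjk.le, lag_of_lt f hj2, lag_of_lt f (by omega), sub_zero]
  · rw [hAj0 k hk le_rfl, lag_of_lt f (by omega)]

theorem ClosedFormAt.sum_Icc {n : ℕ} (h : ClosedFormAt k f A n) {l : ℕ} (hl : 1 ≤ l)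
    (hlk : l ≤ k) : ∑ j ∈ Icc l k, A j n = lag f (n + 1) l :=
  sum_Icc_eq_of_eq_sub_succ hlk
    (fun j hj => h.1 j (by have := (mem_Ico.mp hj).1; omega) (mem_Ico.mp hj).2) h.2

theorem ClosedFormAt.first_succ {a s : ℕ → ℤ} {n : ℕ} (h : ClosedFormAt k f A n) (hk : 1 ≤ k)
    (hf : f (n + 1) = ∑ i ∈ Icc 1 k, a i * lag f (n + 1) i)
    (hs : ∀ j, s j = ∑ l ∈ Icc 1 j, a l)
    (hA1 : A 1 (n + 1) = ∑ j ∈ Icc 1 k, (s j - 1) * A j n) :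
    A 1 (n + 1) = lag f (n + 1 + 1) 1 - lag f (n + 1 + 1) (1 + 1) := by
  have hsA : ∑ j ∈ Icc 1 k, s j * A j n = f (n + 1) := by
    simp_rw [hs, sum_Icc_sum_Icc_mul, hf]
    exact sum_congr rfl fun l hl => by rw [h.sum_Icc (mem_Icc.mp hl).1 (mem_Icc.mp hl).2]
  calc A 1 (n + 1)
      = ∑ j ∈ Icc 1 k, s j * A j n - ∑ j ∈ Icc 1 k, A j n := by
        simp only [hA1, sub_mul, one_mul, sum_sub_distrib]
    _ = f (n + 1) - lag f (n + 1) 1 := by rw [hsA, h.sum_Icc le_rfl hk]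
    _ = lag f (n + 1 + 1) 1 - lag f (n + 1 + 1) (1 + 1) := by simp [lag]

theorem ClosedFormAt.succ {a s : ℕ → ℤ} {n : ℕ} (h : ClosedFormAt k f A n) (hk : 2 ≤ k)
    (hf : f (n + 1) = ∑ i ∈ Icc 1 k, a i * lag f (n + 1) i)
    (hs : ∀ j, s j = ∑ l ∈ Icc 1 j, a l)
    (hA1 : A 1 (n + 1) = ∑ j ∈ Icc 1 k, (s j - 1) * A j n)
    (hAmid : ∀ j, 1 ≤ j → j ≤ k - 2 → A (j + 1) (n + 1) = A j n)
    (hAk : A k (n + 1) = A (k - 1) n + A k n) : ClosedFormAt k f A (n + 1) := by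
  refine ⟨fun j hj hjk => ?_, ?_⟩
  · obtain ⟨i, rfl⟩ : ∃ i, j = i + 1 := ⟨j - 1, by omega⟩
    obtain rfl | hi := Nat.eq_zero_or_pos i
    · exact h.first_succ (by omega) hf hs hA1
    · rw [hAmid i hi (by omega), h.1 i hi (by omega), lag_succ_succ f (n + 1) i,
        lag_succ_succ f (n + 1) (i + 1)]
  · obtain ⟨i, rfl⟩ : ∃ i, k = i + 1 := ⟨k - 1, by omega⟩
    rw [hAk, Nat.add_sub_cancel, h.1 i (by omega) (by omega), h.2, lag_succ_succ f (n + 1) i,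
      sub_add_cancel]

end ClosedFormAt

/-- For the label sequences of the succession rule (9) of the paper:
`A_j(n) = f_{n−j+1} − f_{n−j}` for `2 ≤ j ≤ k−1`, and `A_k(n) = f_{n−k+1}`, where `f` is
the C-finite sequence with coefficients `a₁, …, a_k`, default initial conditions, and
`f_m = 0` for `m < 0`. -/
theorem stmt_8 (k : ℕ) (hk : 2 ≤ k) (a : ℕ → ℤ)
    (f : ℕ → ℤ) (hf0 : f 0 = 1)
    (hf : ∀ n : ℕ, 1 ≤ n →
      f n = ∑ i ∈ Finset.Icc 1 k, a i * (if i ≤ n then f (n - i) else 0))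
    (s : ℕ → ℤ) (hs : ∀ j, s j = ∑ l ∈ Finset.Icc 1 j, a l)
    (A : ℕ → ℕ → ℤ)
    (hA10 : A 1 0 = 1)
    (hAj0 : ∀ j, 2 ≤ j → j ≤ k → A j 0 = 0)
    (hA1 : ∀ n : ℕ, A 1 (n + 1) = ∑ j ∈ Finset.Icc 1 k, (s j - 1) * A j n)
    (hAmid : ∀ n : ℕ, ∀ j, 1 ≤ j → j ≤ k - 2 → A (j + 1) (n + 1) = A j n)
    (hAk : ∀ n : ℕ, A k (n + 1) = A (k - 1) n + A k n) :
    ∀ n : ℕ,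
      (∀ j, 2 ≤ j → j ≤ k - 1 →
        A j n = (if j ≤ n + 1 then f (n + 1 - j) else 0) -
                (if j ≤ n then f (n - j) else 0)) ∧
      A k n = (if k ≤ n + 1 then f (n + 1 - k) else 0) := by
  have hclosed : ∀ n, ClosedFormAt k f A n := by
    intro n
    induction n with
    | zero => exact closedFormAt_zero hk hf0 hA10 hAj0
    | succ n ih => exact ih.succ hk (hf (n + 1) n.succ_pos) hs (hA1 n) (hAmid n) (hAk n)
  intro n
  refine ⟨fun j hj hjk => ?_, (hclosed n).2⟩
  obtain ⟨i, rfl⟩ : ∃ i, j = i + 1 := ⟨j - 1, by omega⟩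
  have := (hclosed n).1 (i + 1) (by omega) (by omega)
  rw [lag_succ_succ f n (i + 1)] at this
  exact this
end

section
/- Define B : ℕ × ℕ → ℕ by B(0,1) = 1, B(0,j) = 0 for j ≠ 1, and for n ≥ 0 and j ≥ 1: B(n+1, j) = j·B(n, j+1) + B(n, j−1), with B(n+1, 0) = 0 (here B(n, j) is the number of nodes labelled (j) at level n of the generating tree of the succession rule with axiom (1) and production (k) ⇝ (k−1)^{k−1}(k+1), a node labelled (j) being placed so that B(n,j) = 0 whenever j > n+1). Then for every n ≥ 0, Σ_{j=0}^{n+1} B(n, j) = f_n, where f : ℕ → ℕ is the number of involutions of n, defined by f_0 = 1, f_1 = 1 and f_n = f_{n−1} + (n−1)·f_{n−2} for n ≥ 2. -/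
/-!
Involutions of `n` points with `k` fixed points number `C(n, k) · m(n - k)`, where `m` counts
perfect matchings. These numbers satisfy the recurrence of the succession rule shifted by one
label, `T(n+1, k) = (k+1) T(n, k+1) + T(n, k-1)` (the new point is either a fixed point or paired
with one of the old fixed points), so `B(n, k+1) = T(n, k)` and each level of the tree sums to the
number of involutions of `n`.
-/

open Finset

/-- The number of perfect matchings of `n` points. -/
def pairings : ℕ → ℕ
  | 0 => 1
  | 1 => 0
  | n + 2 => (n + 1) * pairings n

lemma pairings_succ (n : ℕ) : pairings (n + 1) = n * pairings (n - 1) := by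
  cases n with
  | zero => rfl
  | succ n => rfl

def involWithFixed (n k : ℕ) : ℕ := n.choose k * pairings (n - k)

def involutionCount (n : ℕ) : ℕ := ∑ k ∈ range (n + 1), involWithFixed n k

lemma involWithFixed_eq_zero_of_lt {n k : ℕ} (h : n < k) : involWithFixed n k = 0 := by
  rw [involWithFixed, Nat.choose_eq_zero_of_lt h, zero_mul]

lemma succ_mul_involWithFixed_succ (n k : ℕ) :
    (k + 1) * involWithFixed n (k + 1) = n.choose k * pairings (n + 1 - k) := by
  rcases le_or_gt k n with hk | hk
  · calc (k + 1) * involWithFixed n (k + 1)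
          = n.choose (k + 1) * (k + 1) * pairings (n - k - 1) := by
            rw [involWithFixed, Nat.sub_sub]; ring
      _ = n.choose k * ((n - k) * pairings (n - k - 1)) := by
            rw [Nat.choose_succ_right_eq]; ring
      _ = n.choose k * pairings (n + 1 - k) := by
            rw [← pairings_succ, Nat.sub_add_comm hk]
  · rw [involWithFixed_eq_zero_of_lt (by omega), Nat.choose_eq_zero_of_lt hk]; simp

lemma involWithFixed_succ_zero (n : ℕ) : involWithFixed (n + 1) 0 = involWithFixed n 1 := by
  simpa [involWithFixed] using (succ_mul_involWithFixed_succ n 0).symm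

lemma involWithFixed_succ_succ (n k : ℕ) :
    involWithFixed (n + 1) (k + 1) = (k + 2) * involWithFixed n (k + 2) + involWithFixed n k := by
  rw [succ_mul_involWithFixed_succ, involWithFixed, involWithFixed, Nat.choose_succ_succ',
    Nat.add_sub_add_right]
  ring

lemma succ_mul_involWithFixed_succ_succ (n k : ℕ) :
    (k + 1) * involWithFixed (n + 1) (k + 1) = (n + 1) * involWithFixed n k := by
  rw [involWithFixed, involWithFixed, Nat.add_sub_add_right, ← mul_assoc, mul_comm (k + 1),
    ← Nat.add_one_mul_choose_eq, mul_assoc]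

lemma sum_range_involWithFixed_of_le {n N : ℕ} (h : n + 1 ≤ N) :
    ∑ k ∈ range N, involWithFixed n k = involutionCount n := by
  refine (sum_subset (range_subset_range.mpr h) fun k _ hk => ?_).symm
  exact involWithFixed_eq_zero_of_lt (by simpa using hk)

lemma involutionCount_succ (n : ℕ) :
    involutionCount (n + 1) =
      involutionCount n + ∑ k ∈ range (n + 2), (k + 1) * involWithFixed n (k + 1) := by
  rw [involutionCount, sum_range_succ', involWithFixed_succ_zero]
  simp only [involWithFixed_succ_succ, sum_add_distrib]
  rw [sum_range_succ' (fun k => (k + 1) * involWithFixed n (k + 1)), involutionCount]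
  simp only [zero_add, one_mul]
  ring

lemma involutionCount_succ_succ (n : ℕ) :
    involutionCount (n + 2) = involutionCount (n + 1) + (n + 1) * involutionCount n := by
  rw [involutionCount_succ (n + 1)]
  simp only [succ_mul_involWithFixed_succ_succ, ← mul_sum]
  rw [sum_range_involWithFixed_of_le (by omega)]

lemma eq_involutionCount {f : ℕ → ℕ} (hf0 : f 0 = 1) (hf1 : f 1 = 1)
    (hf : ∀ n : ℕ, f (n + 2) = f (n + 1) + (n + 1) * f n) (n : ℕ) :
    f n = involutionCount n := by
  induction n using Nat.twoStepInduction with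
  | zero => rw [hf0]; rfl
  | one => rw [hf1]; rfl
  | more n ih₀ ih₁ => rw [hf, involutionCount_succ_succ, ih₀, ih₁]

structure IsLabelCount (B : ℕ → ℕ → ℕ) : Prop where
  zero_one : B 0 1 = 1
  zero_of_ne_one : ∀ j, j ≠ 1 → B 0 j = 0
  succ : ∀ n j : ℕ, 1 ≤ j → B (n + 1) j = j * B n (j + 1) + B n (j - 1)
  succ_zero : ∀ n : ℕ, B (n + 1) 0 = 0

namespace IsLabelCount

variable {B : ℕ → ℕ → ℕ}

lemma apply_zero (hB : IsLabelCount B) (n : ℕ) : B n 0 = 0 := by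
  cases n with
  | zero => exact hB.zero_of_ne_one 0 zero_ne_one
  | succ n => exact hB.succ_zero n

lemma apply_succ (hB : IsLabelCount B) (n k : ℕ) : B n (k + 1) = involWithFixed n k := by
  induction n generalizing k with
  | zero =>
    cases k with
    | zero => exact hB.zero_one
    | succ k =>
      rw [hB.zero_of_ne_one _ (by omega), involWithFixed_eq_zero_of_lt (by omega)]
  | succ n ih =>
    cases k with
    | zero => rw [hB.succ n 1 le_rfl, ih, hB.apply_zero, involWithFixed_succ_zero]; ring
    | succ k =>
      rw [hB.succ n (k + 2) (by omega), show k + 2 - 1 = k + 1 from rfl, ih, ih,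
        involWithFixed_succ_succ]

end IsLabelCount

/-- The generating tree of the succession rule `(1); (k) ⇝ (k−1)^{k−1}(k+1)` has, at
level `n`, exactly `f_n` nodes, where `f_n` is the number of involutions of `n`. -/
theorem stmt_10 (B : ℕ → ℕ → ℕ)
    (hB01 : B 0 1 = 1) (hB0 : ∀ j, j ≠ 1 → B 0 j = 0)
    (hB : ∀ n j : ℕ, 1 ≤ j → B (n + 1) j = j * B n (j + 1) + B n (j - 1))
    (hB0' : ∀ n : ℕ, B (n + 1) 0 = 0)
    (f : ℕ → ℕ) (hf0 : f 0 = 1) (hf1 : f 1 = 1)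
    (hf : ∀ n : ℕ, f (n + 2) = f (n + 1) + (n + 1) * f n) :
    ∀ n : ℕ, ∑ j ∈ Finset.range (n + 2), B n j = f n := by
  have hLabel : IsLabelCount B := ⟨hB01, hB0, hB, hB0'⟩
  intro n
  rw [sum_range_succ', hLabel.apply_zero, add_zero, eq_involutionCount hf0 hf1 hf]
  simp only [hLabel.apply_succ]
  rfl
end
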